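/- arXiv:2508.12581 — 2 statements merged into one kernel-verified Lean document; each statement's English description precedes it below -/
import Mathlib

section
/- Let k be a field and k[x,y] a graded polynomial ring with deg x = m > 0 and deg y = n > 0, m and n coprime, m ≤ n. Let f be a monic homogeneous element of positive degree and R = k[x,y]/(f), with a-invariant a = deg f - m - n. Then a < 0 if and only if either R is regular, or f = x^{n_x} with n_x > 1 and (n_x - 1)m < n. -/
/-!
Every monomial `x^i y^j` of `f` has weight `i m + j n = d`. A monomial of total degree `≤ 1`
has weight `0`, `m` or `n`, all below `m + n`; one of total degree `≥ 2` that involves `y` has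
weight `≥ m + n` because `m ≤ n`. So if `d < m + n` and `f ∈ (x, y)²`, then `f` is a scalar
multiple of the single monomial `x^(d/m)`, which monicity turns into `f = x^(d/m)`.
-/

open MvPolynomial

theorem Finsupp.weight_fin_two (m n : ℕ) (μ : Fin 2 →₀ ℕ) :
    weight ![m, n] μ = μ 0 * m + μ 1 * n := by
  simp [weight_apply, Finsupp.sum_fintype, Fin.sum_univ_two, mul_comm]

theorem Finsupp.degree_fin_two (μ : Fin 2 →₀ ℕ) : μ.degree = μ 0 + μ 1 := by
  rw [degree_eq_sum, Fin.sum_univ_two]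

theorem add_lt_mul_add_mul_of_add_lt_two {a b m n : ℕ} (hm : 0 < m) (hn : 0 < n)
    (h : a + b < 2) : a * m + b * n < m + n := by
  obtain ⟨ha | ha, hb | hb⟩ : (a = 0 ∨ a = 1) ∧ (b = 0 ∨ b = 1) := by omega
  all_goals subst ha hb; omega

theorem add_le_mul_add_mul_of_two_le_add {a b m n : ℕ} (hmn : m ≤ n) (h : 2 ≤ a + b)
    (hb : b ≠ 0) : m + n ≤ a * m + b * n := by
  rcases Nat.eq_zero_or_pos a with rfl | ha
  · nlinarith
  · nlinarith [Nat.pos_of_ne_zero hb]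

namespace MvPolynomial

variable {k : Type*} [CommSemiring k]

theorem span_X_zero_X_one :
    Ideal.span {(X 0 : MvPolynomial (Fin 2) k), X 1} = idealOfVars (Fin 2) k := by
  rw [idealOfVars, Set.range]
  congr 1
  ext p
  simp [Fin.exists_fin_two, eq_comm]

theorem mem_span_X_zero_X_one_sq_iff (f : MvPolynomial (Fin 2) k) :
    f ∈ Ideal.span {(X 0 : MvPolynomial (Fin 2) k), X 1} ^ 2 ↔
      ∀ μ ∈ f.support, 2 ≤ μ 0 + μ 1 := by
  simp only [span_X_zero_X_one, mem_pow_idealOfVars_iff, Finsupp.degree_fin_two]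

variable {m n d : ℕ} {f : MvPolynomial (Fin 2) k}

theorem lt_add_of_notMem_span_X_zero_X_one_sq (hm : 0 < m) (hn : 0 < n)
    (hf : f.IsWeightedHomogeneous ![m, n] d)
    (hsq : f ∉ Ideal.span {(X 0 : MvPolynomial (Fin 2) k), X 1} ^ 2) : d < m + n := by
  simp only [mem_span_X_zero_X_one_sq_iff, not_forall, not_le] at hsq
  obtain ⟨μ, hμ, hlt⟩ := hsq
  rw [← hf (mem_support_iff.mp hμ), Finsupp.weight_fin_two]
  exact add_lt_mul_add_mul_of_add_lt_two hm hn hlt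

theorem eq_smul_X_zero_pow_of_mem_span_X_zero_X_one_sq (hm : 0 < m) (hmn : m ≤ n)
    (hf : f.IsWeightedHomogeneous ![m, n] d) (hd : d < m + n)
    (hsq : f ∈ Ideal.span {(X 0 : MvPolynomial (Fin 2) k), X 1} ^ 2) :
    f = coeff (Finsupp.single 0 (d / m)) f • X 0 ^ (d / m) := by
  rw [X_pow_eq_monomial, smul_monomial, smul_eq_mul, mul_one]
  refine eq_monomial_of_support_subset_singleton fun μ hμ => ?_
  have hweight : μ 0 * m + μ 1 * n = d := by
    rw [← Finsupp.weight_fin_two]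
    exact hf (mem_support_iff.mp hμ)
  have hμ1 : μ 1 = 0 := by
    by_contra hμ1
    have hdeg := (mem_span_X_zero_X_one_sq_iff f).mp hsq μ hμ
    have := add_le_mul_add_mul_of_two_le_add hmn hdeg hμ1
    omega
  have hμ0 : μ 0 = d / m := by
    rw [← hweight, hμ1, zero_mul, add_zero, Nat.mul_div_cancel _ hm]
  ext i
  fin_cases i <;> simp [hμ0, hμ1]

variable [Nontrivial k]

theorem X_zero_pow_mem_span_X_zero_X_one_sq_iff (a : ℕ) :
    (X 0 : MvPolynomial (Fin 2) k) ^ a ∈ Ideal.span {(X 0 : MvPolynomial (Fin 2) k), X 1} ^ 2 ↔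
      2 ≤ a := by
  rw [span_X_zero_X_one, X_pow_eq_monomial, monomial_mem_pow_idealOfVars_iff _ _ one_ne_zero]
  simp

theorem mul_eq_of_isWeightedHomogeneous_X_zero_pow {m n a d : ℕ}
    (h : ((X 0 : MvPolynomial (Fin 2) k) ^ a).IsWeightedHomogeneous ![m, n] d) : a * m = d := by
  have := h (show coeff (Finsupp.single 0 a) ((X 0 : MvPolynomial (Fin 2) k) ^ a) ≠ 0 by
    simp [X_pow_eq_monomial, coeff_monomial])
  simpa [Finsupp.weight_fin_two] using this

end MvPolynomial

theorem a_invariant_negative_iff_general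
    {k : Type} [Field k] (m n : ℕ) (hm : 0 < m) (hn : 0 < n) (hmn : m ≤ n)
    (f : MvPolynomial (Fin 2) k) (d : ℕ)
    (hhom : f.IsWeightedHomogeneous ![m, n] d)
    (hmonic : ∀ (nx : ℕ) (c : k), f = c • (X 0 : MvPolynomial (Fin 2) k) ^ nx →
      f = (X 0 : MvPolynomial (Fin 2) k) ^ nx) :
    ((d : ℤ) - m - n < 0) ↔
      (f ∉ (Ideal.span {(X 0 : MvPolynomial (Fin 2) k), X 1}) ^ 2 ∨
        ∃ nx : ℕ, 1 < nx ∧ f = (X 0 : MvPolynomial (Fin 2) k) ^ nx ∧ (nx - 1) * m < n) := by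
  rw [show (d : ℤ) - m - n < 0 ↔ d < m + n by omega]
  constructor
  · intro hd
    by_cases hsq : f ∈ Ideal.span {(X 0 : MvPolynomial (Fin 2) k), X 1} ^ 2
    · have hfx := hmonic _ _ (eq_smul_X_zero_pow_of_mem_span_X_zero_X_one_sq hm hmn hhom hd hsq)
      rw [hfx] at hhom hsq
      have hdeg := mul_eq_of_isWeightedHomogeneous_X_zero_pow hhom
      refine Or.inr ⟨d / m, (X_zero_pow_mem_span_X_zero_X_one_sq_iff _).mp hsq, hfx, ?_⟩
      rw [Nat.sub_one_mul]
      omega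
    · exact Or.inl hsq
  · rintro (hsq | ⟨nx, hnx, rfl, hlt⟩)
    · exact lt_add_of_notMem_span_X_zero_X_one_sq hm hn hhom hsq
    · have hdeg := mul_eq_of_isWeightedHomogeneous_X_zero_pow hhom
      have := Nat.le_mul_of_pos_left m (by omega : 0 < nx)
      rw [Nat.sub_one_mul] at hlt
      omega

/-- For `R = k[x,y]/(f)` with `deg x = m`, `deg y = n` positive coprime,
`m ≤ n`, and `f` monic homogeneous of positive degree `d`, the `a`-invariant
`a = d - m - n` is negative if and only if either `R` is regular (equivalently,
`f ∉ (x,y)²`) or `f = x^{n_x}` with `n_x > 1` and `(n_x - 1)·m < n`. -/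
theorem a_invariant_negative_iff
    {k : Type} [Field k] (m n : ℕ) (hm : 0 < m) (hn : 0 < n) (hmn : m ≤ n)
    (hcop : Nat.Coprime m n)
    (f : MvPolynomial (Fin 2) k) (d : ℕ) (hd : 0 < d) (hf0 : f ≠ 0)
    (hhom : f.IsWeightedHomogeneous ![m, n] d)
    (hmonic : ∀ (nx : ℕ) (c : k), f = c • (X 0 : MvPolynomial (Fin 2) k) ^ nx →
      f = (X 0 : MvPolynomial (Fin 2) k) ^ nx) :
    ((d : ℤ) - m - n < 0) ↔
      (f ∉ (Ideal.span {(X 0 : MvPolynomial (Fin 2) k), X 1}) ^ 2 ∨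
        ∃ nx : ℕ, 1 < nx ∧ f = (X 0 : MvPolynomial (Fin 2) k) ^ nx ∧ (nx - 1) * m < n) :=
  a_invariant_negative_iff_general m n hm hn hmn f d hhom hmonic
end

section
/- Let R = k[x,y]/(f) with x, y of positive coprime degrees m ≤ n and f monic homogeneous with deg f ≥ m + n, and set a = deg f - m - n. For all integers 1 ≤ i, i' ≤ a, the space of degree-0 graded R-module homomorphisms from R(i)_{≥0} to R(i')_{≥0} is isomorphic as a k-vector space to R_{i'-i}, the degree (i'-i) homogeneous component of R. -/
open MvPolynomial

set_option synthInstance.maxHeartbeats 1000000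
set_option maxHeartbeats 1600000

section

variable {k : Type} [Field k] (m n : ℕ) (f : MvPolynomial (Fin 2) k)

/-- The hypersurface ring `R = k[x,y]/(f)`. -/
abbrev HypersurfaceRing := MvPolynomial (Fin 2) k ⧸ Ideal.span {f}

/-- The degree-`dd` homogeneous component of `R = k[x,y]/(f)` for the grading
`deg x = m`, `deg y = n` (trivial in negative degrees). -/
noncomputable def hyperComp (dd : ℤ) : Submodule k (HypersurfaceRing f) :=
  (weightedHomogeneousSubmodule k ![(m : ℤ), (n : ℤ)] dd).map
    (Ideal.Quotient.mkₐ k (Ideal.span {f})).toLinearMap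

/-- The truncated shifted module `R(i)_{≥0}`, realized as the `R`-submodule
`R_{≥ i} ⊆ R`. -/
noncomputable def hyperTrunc (i : ℤ) : Submodule (HypersurfaceRing f) (HypersurfaceRing f) :=
  Submodule.span (HypersurfaceRing f)
    {r : HypersurfaceRing f | ∃ e : ℤ, i ≤ e ∧ r ∈ hyperComp m n f e}

/-- The space of degree-`0` graded `R`-module homomorphisms
`R(i)_{≥0} → R(i')_{≥0}`, i.e. `R`-linear maps `R_{≥i} → R_{≥i'}` shifting
degrees by `i' - i`. -/
noncomputable def hyperHom0 (i i' : ℤ) :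
    Submodule k ((hyperTrunc m n f i) →ₗ[HypersurfaceRing f] (hyperTrunc m n f i')) where
  carrier := {φ | ∀ (e : ℤ) (v : hyperTrunc m n f i),
    (v : HypersurfaceRing f) ∈ hyperComp m n f e →
      ((φ v : HypersurfaceRing f) ∈ hyperComp m n f (e + (i' - i)))}
  add_mem' := by
    intro φ ψ hφ hψ e v hv
    simpa using Submodule.add_mem _ (hφ e v hv) (hψ e v hv)
  zero_mem' := by
    intro e v hv
    simpa using Submodule.zero_mem _
  smul_mem' := by
    intro c φ hφ e v hv
    simpa using Submodule.smul_mem _ c (hφ e v hv)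

end

/-!
Multiplication gives a `k`-linear map `R_{i'-i} → Hom(R(i)_{≥0}, R(i')_{≥0})`. It is injective
because `x^P` and `y^Q` lie in `R_{≥i}` for large `P, Q`, and an element of `R` killed by both
vanishes, `x^P` and `y^Q` being coprime in the factorial ring `k[x,y]`.

For surjectivity evaluate `φ` on the staircase `x^p y^{Q_p}` (`0 ≤ p ≤ P`, `Q_p` minimal with
`p m + Q_p n ≥ i`, `Q_P = 0`) of monomials in `R_{≥i}`. Homogeneous lifts `g_p` of their
images satisfy `x g_p ≡ y^{Q_p - Q_{p+1}} g_{p+1}` modulo `f`, in degree `< i' + m + n ≤ deg f`,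
where `(f)` is zero; so these are identities in `k[x,y]` and telescope to
`x^P g_0 = y^{Q_0} g_P`. Hence `g_P = x^P r` and `g_0 = y^{Q_0} r`, so `φ` agrees with
multiplication by `r` on `x^P` and `y^{Q_0}`, hence everywhere.
-/

theorem IsRelPrime.dvd_of_dvd_mul_of_dvd_mul {α : Type*} [CommMonoidWithZero α]
    [IsCancelMulZero α] [DecompositionMonoid α] {a b c d : α} (hab : IsRelPrime a b)
    (ha : d ∣ c * a) (hb : d ∣ c * b) : d ∣ c := by
  obtain ⟨d₁, d₂, hd₁, hd₂, rfl⟩ := exists_dvd_and_dvd_of_dvd_mul ha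
  obtain ⟨c', rfl⟩ := hd₁
  rcases eq_or_ne d₁ 0 with rfl | hd₁
  · simp
  have hd₂b : d₂ ∣ c' * b := (mul_dvd_mul_iff_left hd₁).mp (by rwa [mul_assoc] at hb)
  exact mul_dvd_mul_left d₁ ((hab.of_dvd_left hd₂).dvd_of_dvd_mul_right hd₂b)

theorem Ideal.Quotient.eq_zero_of_mul_mk_eq_zero_of_isRelPrime {A : Type*} [CommRing A]
    [IsDomain A] [DecompositionMonoid A] {f a b : A} (hab : IsRelPrime a b)
    {c : A ⧸ Ideal.span {f}} (ha : c * Ideal.Quotient.mk _ a = 0)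
    (hb : c * Ideal.Quotient.mk _ b = 0) : c = 0 := by
  obtain ⟨c, rfl⟩ := Ideal.Quotient.mk_surjective c
  rw [← map_mul, Ideal.Quotient.eq_zero_iff_dvd] at ha hb
  rw [Ideal.Quotient.eq_zero_iff_dvd]
  exact hab.dvd_of_dvd_mul_of_dvd_mul ha hb

section SelfSubmodule

variable {A : Type*} [CommRing A] {I J : Submodule A A} (φ : I →ₗ[A] J)

theorem mul_map_eq_mul_map_of_mul_eq {a b : A} {u v : I} (h : a * u = b * v) :
    a * (φ u : A) = b * φ v := by
  simpa using congrArg (fun w => (φ w : A)) (Subtype.ext h : a • u = b • v)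

theorem map_eq_mul_of_map_eq_mul {a b : I} {ρ : A}
    (hab : ∀ c : A, c * a = 0 → c * b = 0 → c = 0)
    (ha : (φ a : A) = ρ * a) (hb : (φ b : A) = ρ * b) (v : I) : (φ v : A) = ρ * v := by
  have hkill : ∀ u : I, (φ u : A) = ρ * u → ((φ v : A) - ρ * v) * u = 0 := by
    intro u hu
    have := mul_map_eq_mul_map_of_mul_eq φ (mul_comm (u : A) v)
    rw [hu] at this
    linear_combination this
  exact sub_eq_zero.mp (hab _ (hkill a ha) (hkill b hb))

end SelfSubmodule

theorem pow_mul_eq_pow_tsub_mul_of_chain {M : Type*} [CommMonoid M] {x y : M} {g : ℕ → M}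
    {Q : ℕ → ℕ} (hQ : Antitone Q) {P : ℕ}
    (h : ∀ p < P, x * g p = y ^ (Q p - Q (p + 1)) * g (p + 1)) :
    ∀ p ≤ P, x ^ p * g 0 = y ^ (Q 0 - Q p) * g p := by
  intro p hp
  induction p with
  | zero => simp
  | succ p ih =>
    calc x ^ (p + 1) * g 0 = x * (x ^ p * g 0) := by rw [pow_succ', mul_assoc]
      _ = y ^ (Q 0 - Q p) * (x * g p) := by rw [ih (by omega), mul_left_comm]
      _ = y ^ (Q 0 - Q (p + 1)) * g (p + 1) := by
        rw [h p (by omega), ← mul_assoc, ← pow_add,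
          tsub_add_tsub_cancel (hQ p.zero_le) (hQ p.le_succ)]

theorem exists_staircase {m n : ℕ} (hm : 0 < m) (hn : 0 < n) (i : ℤ) :
    ∃ (P : ℕ) (Q : ℕ → ℕ), Q P = 0 ∧ Antitone Q ∧ (∀ p : ℕ, i ≤ p * m + Q p * n) ∧
      ∀ p < P, (p * m + Q p * n : ℤ) < i + n := by
  classical
  have hP : ∃ p : ℕ, i ≤ p * m := ⟨i.toNat, by nlinarith [Int.self_le_toNat i]⟩
  have hQ : ∀ p : ℕ, ∃ q : ℕ, i ≤ p * m + q * n :=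
    fun p => ⟨i.toNat, by nlinarith [Int.self_le_toNat i]⟩
  refine ⟨Nat.find hP, fun p => Nat.find (hQ p), ?_, ?_, fun p => Nat.find_spec (hQ p), ?_⟩
  · exact Nat.find_eq_zero _ |>.mpr (by simpa using Nat.find_spec hP)
  · refine antitone_nat_of_succ_le fun p => Nat.find_min' _ ?_
    have := Nat.find_spec (hQ p)
    push_cast
    linarith
  · intro p hp
    dsimp only
    rcases hq : Nat.find (hQ p) with _ | q
    · have := Nat.find_min hP hp
      push Not at this
      push_cast
      linarith
    · have := Nat.find_min (hQ p) (m := q) (by omega)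
      push Not at this
      push_cast
      linarith

namespace MvPolynomial

variable {σ R M : Type*}

theorem IsWeightedHomogeneous.mul_weightedHomogeneousComponent [CommSemiring R]
    [AddCancelCommMonoid M] {w : σ → M} {φ ψ : MvPolynomial σ R} {d e : M}
    (hφ : IsWeightedHomogeneous w φ d) (hφψ : IsWeightedHomogeneous w (φ * ψ) (d + e)) :
    φ * ψ = φ * weightedHomogeneousComponent w e ψ := by
  classical
  let _ := weightedGradedAlgebra R w
  rw [← hφψ.weightedHomogeneousComponent_same, ← weightedDecomposition.decompose'_apply,
    ← weightedDecomposition.decompose'_apply]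
  exact DirectSum.coe_decompose_mul_add_of_left_mem _ hφ

theorem IsWeightedHomogeneous.of_mul_left [CommRing R] [IsDomain R] [AddCancelCommMonoid M]
    {w : σ → M} {φ ψ : MvPolynomial σ R} {d e : M} (hφ : IsWeightedHomogeneous w φ d)
    (hφ0 : φ ≠ 0) (hφψ : IsWeightedHomogeneous w (φ * ψ) (d + e)) :
    IsWeightedHomogeneous w ψ e := by
  rw [mul_left_cancel₀ hφ0 (hφ.mul_weightedHomogeneousComponent hφψ)]
  exact weightedHomogeneousComponent_isWeightedHomogeneous e ψ

theorem weightedHomogeneousComponent_eq_zero_of_neg [CommSemiring R] {w : σ → ℤ}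
    (hw : ∀ s, 0 ≤ w s) {e : ℤ} (he : e < 0) (φ : MvPolynomial σ R) :
    weightedHomogeneousComponent w e φ = 0 := by
  refine weightedHomogeneousComponent_eq_zero' e φ fun d _ => ?_
  have : 0 ≤ Finsupp.weight w d := by
    rw [Finsupp.weight_apply]
    exact Finsupp.sum_nonneg fun s _ => smul_nonneg (Nat.zero_le _) (hw s)
  omega

theorem IsWeightedHomogeneous.eq_zero_of_dvd_of_lt [CommSemiring R] {w : σ → ℤ}
    (hw : ∀ s, 0 ≤ w s) {f g : MvPolynomial σ R} {d e : ℤ} (hf : IsWeightedHomogeneous w f d)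
    (hg : IsWeightedHomogeneous w g e) (hfg : f ∣ g) (hed : e < d) : g = 0 := by
  obtain ⟨h, rfl⟩ := hfg
  rw [hf.mul_weightedHomogeneousComponent (e := e - d) (by rwa [add_sub_cancel]),
    weightedHomogeneousComponent_eq_zero_of_neg hw (by omega), mul_zero]

end MvPolynomial

section Hypersurface

variable {k : Type} [Field k] {m n : ℕ} {f : MvPolynomial (Fin 2) k}

local notation "S" => MvPolynomial (Fin 2) k
local notation "mk" => Ideal.Quotient.mk (Ideal.span (singleton f))

theorem isRelPrime_X_zero_pow_X_one_pow (P Q : ℕ) : IsRelPrime (X 0 ^ P : S) (X 1 ^ Q) :=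
  (X_prime.irreducible.isRelPrime_iff_not_dvd.mpr (by simp)).pow

theorem isWeightedHomogeneous_X_zero_pow (p : ℕ) :
    (X 0 ^ p : S).IsWeightedHomogeneous ![(m : ℤ), (n : ℤ)] (p * m) := by
  simpa using (isWeightedHomogeneous_X k ![(m : ℤ), (n : ℤ)] 0).pow p

theorem isWeightedHomogeneous_X_one_pow (q : ℕ) :
    (X 1 ^ q : S).IsWeightedHomogeneous ![(m : ℤ), (n : ℤ)] (q * n) := by
  simpa using (isWeightedHomogeneous_X k ![(m : ℤ), (n : ℤ)] 1).pow q

theorem isWeightedHomogeneous_X_pow_mul_X_pow (p q : ℕ) :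
    (X 0 ^ p * X 1 ^ q : S).IsWeightedHomogeneous ![(m : ℤ), (n : ℤ)] (p * m + q * n) :=
  (isWeightedHomogeneous_X_zero_pow p).mul (isWeightedHomogeneous_X_one_pow q)

theorem mem_hyperComp_iff {r : HypersurfaceRing f} {d : ℤ} :
    r ∈ hyperComp m n f d ↔ ∃ g : S, g.IsWeightedHomogeneous ![(m : ℤ), (n : ℤ)] d ∧ mk g = r :=
  Iff.rfl

theorem mul_mem_hyperComp {r r' : HypersurfaceRing f} {d d' : ℤ} (h : r ∈ hyperComp m n f d)
    (h' : r' ∈ hyperComp m n f d') : r * r' ∈ hyperComp m n f (d + d') := by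
  obtain ⟨g, hg, rfl⟩ := mem_hyperComp_iff.mp h
  obtain ⟨g', hg', rfl⟩ := mem_hyperComp_iff.mp h'
  exact mem_hyperComp_iff.mpr ⟨g * g', hg.mul hg', map_mul _ _ _⟩

theorem mem_hyperTrunc_of_mem_hyperComp {r : HypersurfaceRing f} {i e : ℤ} (hie : i ≤ e)
    (hr : r ∈ hyperComp m n f e) : r ∈ hyperTrunc m n f i :=
  Submodule.subset_span ⟨e, hie, hr⟩

theorem mul_mem_hyperTrunc {i i' : ℤ} {r v : HypersurfaceRing f}
    (hr : r ∈ hyperComp m n f (i' - i)) (hv : v ∈ hyperTrunc m n f i) :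
    r * v ∈ hyperTrunc m n f i' := by
  induction hv using Submodule.span_induction with
  | mem w hw =>
    obtain ⟨e, hie, hwe⟩ := hw
    exact mem_hyperTrunc_of_mem_hyperComp (by omega : i' ≤ i' - i + e) (mul_mem_hyperComp hr hwe)
  | zero => simp
  | add a b _ _ ha hb => rw [mul_add]; exact add_mem ha hb
  | smul c a _ ha => rw [smul_eq_mul, mul_left_comm]; exact Submodule.smul_mem _ c ha

theorem mk_X_pow_mul_X_pow_mem_hyperTrunc {i : ℤ} {p q : ℕ} (h : i ≤ p * m + q * n) :
    mk (X 0 ^ p * X 1 ^ q) ∈ hyperTrunc m n f i :=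
  mem_hyperTrunc_of_mem_hyperComp h
    (mem_hyperComp_iff.mpr ⟨_, isWeightedHomogeneous_X_pow_mul_X_pow p q, rfl⟩)

theorem eq_zero_of_mul_mk_X_pow_eq_zero {c : HypersurfaceRing f} {P Q : ℕ}
    (hP : c * mk (X 0 ^ P) = 0) (hQ : c * mk (X 1 ^ Q) = 0) : c = 0 :=
  Ideal.Quotient.eq_zero_of_mul_mk_eq_zero_of_isRelPrime
    (isRelPrime_X_zero_pow_X_one_pow P Q) hP hQ

variable (m n f) in
noncomputable def mulHom (i i' : ℤ) : hyperComp m n f (i' - i) →ₗ[k] hyperHom0 m n f i i' where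
  toFun r := ⟨(LinearMap.mulLeft (HypersurfaceRing f) (r : HypersurfaceRing f)).restrict
      fun _ hv => mul_mem_hyperTrunc r.2 hv, fun e _ hv => by
        rw [add_comm]; exact mul_mem_hyperComp r.2 hv⟩
  map_add' r s := by ext; exact add_mul _ _ _
  map_smul' c r := by ext; exact smul_mul_assoc _ _ _

@[simp]
theorem mulHom_apply_coe {i i' : ℤ} (r : hyperComp m n f (i' - i)) (v : hyperTrunc m n f i) :
    ((mulHom m n f i i' r : hyperTrunc m n f i →ₗ[HypersurfaceRing f] hyperTrunc m n f i') v :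
      HypersurfaceRing f) = r * v :=
  rfl

theorem mulHom_injective (hm : 0 < m) (hn : 0 < n) (i i' : ℤ) :
    Function.Injective (mulHom m n f i i') := by
  rw [injective_iff_map_eq_zero]
  intro r hr
  obtain ⟨P, Q, hQP, -, hle, -⟩ := exists_staircase hm hn i
  have hkill : ∀ p q : ℕ, i ≤ p * m + q * n →
      (r : HypersurfaceRing f) * mk (X 0 ^ p * X 1 ^ q) = 0 := fun p q h => by
    simpa using congrArg (fun φ : hyperHom0 m n f i i' =>
      (φ.1 ⟨_, mk_X_pow_mul_X_pow_mem_hyperTrunc h⟩ : HypersurfaceRing f)) hr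
  refine Subtype.ext (eq_zero_of_mul_mk_X_pow_eq_zero (P := P) (Q := Q 0) ?_ ?_)
  · simpa [hQP] using hkill P (Q P) (hle P)
  · simpa using hkill 0 (Q 0) (hle 0)

theorem eq_of_mk_eq_of_isWeightedHomogeneous {dF : ℕ}
    (hhom : f.IsWeightedHomogeneous ![(m : ℤ), (n : ℤ)] dF) {a b : S} {e : ℤ}
    (ha : a.IsWeightedHomogeneous ![(m : ℤ), (n : ℤ)] e)
    (hb : b.IsWeightedHomogeneous ![(m : ℤ), (n : ℤ)] e) (he : e < dF) (hab : mk a = mk b) :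
    a = b := by
  refine sub_eq_zero.mp (hhom.eq_zero_of_dvd_of_lt ?_ (ha.sub hb) ?_ he)
  · simp [Fin.forall_fin_two]
  · rwa [← Ideal.Quotient.eq_zero_iff_dvd, map_sub, sub_eq_zero]

theorem X_zero_mul_eq_X_one_pow_mul_of_map {dF : ℕ}
    (hhom : f.IsWeightedHomogeneous ![(m : ℤ), (n : ℤ)] dF) {i i' : ℤ}
    (hi' : i' ≤ (dF : ℤ) - m - n)
    (φ : hyperTrunc m n f i →ₗ[HypersurfaceRing f] hyperTrunc m n f i')
    {p q q' : ℕ} (hq : q' ≤ q) {u u' : hyperTrunc m n f i}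
    (hu : (u : HypersurfaceRing f) = mk (X 0 ^ p * X 1 ^ q))
    (hu' : (u' : HypersurfaceRing f) = mk (X 0 ^ (p + 1) * X 1 ^ q')) {g g' : S}
    (hg : g.IsWeightedHomogeneous ![(m : ℤ), (n : ℤ)] (p * m + q * n + (i' - i)))
    (hg' : g'.IsWeightedHomogeneous ![(m : ℤ), (n : ℤ)] ((p + 1 : ℕ) * m + q' * n + (i' - i)))
    (hgφ : mk g = φ u) (hg'φ : mk g' = φ u') (hpq : (p * m + q * n : ℤ) < i + n) :
    X 0 * g = X 1 ^ (q - q') * g' := by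
  have hX0 : (X 0 : S).IsWeightedHomogeneous ![(m : ℤ), (n : ℤ)] m := by
    simpa using isWeightedHomogeneous_X_zero_pow (k := k) (m := m) (n := n) 1
  have hright := (isWeightedHomogeneous_X_one_pow (q - q')).mul hg'
  rw [show ((q - q' : ℕ) : ℤ) * n + ((p + 1 : ℕ) * m + q' * n + (i' - i)) =
      m + (p * m + q * n + (i' - i)) by push_cast [Nat.cast_sub hq]; ring] at hright
  refine eq_of_mk_eq_of_isWeightedHomogeneous hhom (hX0.mul hg) hright (by linarith) ?_
  rw [map_mul, map_mul, hgφ, hg'φ]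
  refine mul_map_eq_mul_map_of_mul_eq φ ?_
  rw [hu, hu', ← map_mul, ← map_mul, ← mul_assoc, ← pow_succ', mul_left_comm, ← pow_add,
    tsub_add_cancel_of_le hq]

theorem mulHom_surjective (hm : 0 < m) (hn : 0 < n) {dF : ℕ}
    (hhom : f.IsWeightedHomogeneous ![(m : ℤ), (n : ℤ)] dF) {i i' : ℤ}
    (hi' : i' ≤ (dF : ℤ) - m - n) : Function.Surjective (mulHom m n f i i') := by
  rintro ⟨φ, hφ⟩
  obtain ⟨P, Q, hQP, hQ, hle, hlt⟩ := exists_staircase hm hn i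
  let u : ℕ → hyperTrunc m n f i := fun p =>
    ⟨mk (X 0 ^ p * X 1 ^ Q p), mk_X_pow_mul_X_pow_mem_hyperTrunc (hle p)⟩
  choose g hg hgφ using fun p => mem_hyperComp_iff.mp
    (hφ _ (u p) (mem_hyperComp_iff.mpr ⟨_, isWeightedHomogeneous_X_pow_mul_X_pow p (Q p), rfl⟩))
  have hchain : ∀ p < P, X 0 * g p = X 1 ^ (Q p - Q (p + 1)) * g (p + 1) := fun p hp =>
    X_zero_mul_eq_X_one_pow_mul_of_map hhom hi' φ (hQ p.le_succ) rfl rfl (hg p) (hg (p + 1))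
      (hgφ p) (hgφ (p + 1)) (hlt p hp)
  have htel := pow_mul_eq_pow_tsub_mul_of_chain hQ hchain P le_rfl
  rw [hQP, tsub_zero] at htel
  obtain ⟨r, hr⟩ : X 0 ^ P ∣ g P :=
    (isRelPrime_X_zero_pow_X_one_pow P (Q 0)).dvd_of_dvd_mul_left ⟨g 0, htel.symm⟩
  have hr_hom : r.IsWeightedHomogeneous ![(m : ℤ), (n : ℤ)] (i' - i) :=
    (isWeightedHomogeneous_X_zero_pow P).of_mul_left (pow_ne_zero _ (X_ne_zero 0))
      (by simpa [hr, hQP] using hg P)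
  have hg0 : g 0 = X 1 ^ Q 0 * r :=
    mul_left_cancel₀ (pow_ne_zero P (X_ne_zero 0)) (by rw [htel, hr]; ring)
  refine ⟨⟨mk r, mem_hyperComp_iff.mpr ⟨r, hr_hom, rfl⟩⟩,
    Subtype.ext (LinearMap.ext fun v => Subtype.ext ?_)⟩
  refine (map_eq_mul_of_map_eq_mul φ (a := u P) (b := u 0) (ρ := mk r) ?_ ?_ ?_ v).symm
  · intro c hP h0
    exact eq_zero_of_mul_mk_X_pow_eq_zero (P := P) (Q := Q 0) (by simpa [u, hQP] using hP)
      (by simpa [u] using h0)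
  · rw [← hgφ P, hr, map_mul, mul_comm]
    simp [u, hQP]
  · rw [← hgφ 0, hg0, map_mul, mul_comm]
    simp [u]

end Hypersurface

theorem hom_trunc_iso_component_general
    {k : Type} [Field k] (m n : ℕ) (hm : 0 < m) (hn : 0 < n)
    (f : MvPolynomial (Fin 2) k) (dF : ℕ)
    (hhom : f.IsWeightedHomogeneous ![(m : ℤ), (n : ℤ)] dF)
    (i i' : ℤ)
    (hi'a : i' ≤ (dF : ℤ) - m - n) :
    Nonempty ((hyperHom0 m n f i i') ≃ₗ[k] hyperComp m n f (i' - i)) :=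
  ⟨(LinearEquiv.ofBijective (mulHom m n f i i')
    ⟨mulHom_injective hm hn i i', mulHom_surjective hm hn hhom hi'a⟩).symm⟩

/-- Let `R = k[x,y]/(f)` with `deg x = m`, `deg y = n` positive
coprime, `m ≤ n`, and `f` homogeneous of degree `dF ≥ m + n`; set
`a = dF - m - n`.  For all `1 ≤ i, i' ≤ a`, the space of degree-`0` graded
`R`-module homomorphisms `R(i)_{≥0} → R(i')_{≥0}` is isomorphic as a `k`-vector
space to the homogeneous component `R_{i'-i}`. -/
theorem hom_trunc_iso_component
    {k : Type} [Field k] (m n : ℕ) (hm : 0 < m) (hn : 0 < n) (hmn : m ≤ n)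
    (hcop : Nat.Coprime m n)
    (f : MvPolynomial (Fin 2) k) (dF : ℕ) (hf0 : f ≠ 0)
    (hhom : f.IsWeightedHomogeneous ![(m : ℤ), (n : ℤ)] dF)
    (hdF : m + n ≤ dF)
    (i i' : ℤ) (hi1 : 1 ≤ i) (hia : i ≤ (dF : ℤ) - m - n)
    (hi'1 : 1 ≤ i') (hi'a : i' ≤ (dF : ℤ) - m - n) :
    Nonempty ((hyperHom0 m n f i i') ≃ₗ[k] hyperComp m n f (i' - i)) :=
  hom_trunc_iso_component_general m n hm hn f dF hhom i i' hi'a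
end
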